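/- arXiv:1103.2729 — 3 statements merged into one kernel-verified Lean document; each statement's English description precedes it below -/
import Mathlib

section
/- Let E and F be real inner product spaces, let r be a positive integer, and let φ : Fin r → E and ψ : Fin r → F be families of vectors. Let M be the Gram matrix of φ in E and H the Gram matrix of ψ in F, and assume M is positive definite (equivalently, the φ_j are linearly independent). Then for every x ∈ ℝ^r, ‖Σ_{j=1}^r x_j ψ_j‖_F ≤ √(‖H‖₂ · ‖M⁻¹‖₂) · ‖Σ_{j=1}^r x_j φ_j‖_E. -/
open scoped Matrix RealInnerProductSpace

/-- The spectral norm of a real `r × r` matrix: the operator norm of the matrix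
acting on Euclidean space `ℝ^r` with the `ℓ²` norm. -/
noncomputable def matSpectralNorm {r : ℕ} (A : Matrix (Fin r) (Fin r) ℝ) : ℝ :=
  ‖Matrix.toEuclideanCLM (𝕜 := ℝ) A‖

/-- The Gram matrix of a family `φ : Fin r → E` in a real inner product space `E`:
the `r × r` real matrix with entries `M i j = ⟪φ j, φ i⟫`. -/
noncomputable def gramMatrix {E : Type*} [NormedAddCommGroup E] [InnerProductSpace ℝ E]
    {r : ℕ} (φ : Fin r → E) : Matrix (Fin r) (Fin r) ℝ :=
  Matrix.of fun i j => ⟪φ j, φ i⟫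

/-!
Write `v = ∑ xⱼ φⱼ`. Both sides are controlled through the Euclidean norm `|x|`: on the one hand
`‖∑ xⱼ ψⱼ‖² = xᵀ H x ≤ ‖H‖₂ |x|²`. On the other hand, with `z = M⁻¹ x` and `w = ∑ zⱼ φⱼ` we have
`⟪w, v⟫ = xᵀ M z = |x|²` and `‖w‖² = zᵀ M z = xᵀ M⁻¹ x ≤ ‖M⁻¹‖₂ |x|²`, so Cauchy–Schwarz gives
`|x|⁴ ≤ ‖M⁻¹‖₂ |x|² ‖v‖²`, i.e. `|x|² ≤ ‖M⁻¹‖₂ ‖v‖²`.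
-/

lemma matSpectralNorm_nonneg {r : ℕ} (A : Matrix (Fin r) (Fin r) ℝ) : 0 ≤ matSpectralNorm A :=
  norm_nonneg _

lemma dotProduct_mulVec_le_matSpectralNorm_mul {r : ℕ} (A : Matrix (Fin r) (Fin r) ℝ)
    (x : Fin r → ℝ) : x ⬝ᵥ A *ᵥ x ≤ matSpectralNorm A * (x ⬝ᵥ x) := by
  set y : EuclideanSpace ℝ (Fin r) := WithLp.toLp 2 x
  have hy : x ⬝ᵥ x = ‖y‖ ^ 2 := by
    rw [← real_inner_self_eq_norm_sq, EuclideanSpace.inner_eq_star_dotProduct]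
    rfl
  calc x ⬝ᵥ A *ᵥ x = ⟪y, Matrix.toEuclideanCLM (𝕜 := ℝ) A y⟫ :=
        (Matrix.inner_toEuclideanCLM A y y).symm
    _ ≤ ‖y‖ * ‖Matrix.toEuclideanCLM (𝕜 := ℝ) A y‖ := real_inner_le_norm _ _
    _ ≤ ‖y‖ * (matSpectralNorm A * ‖y‖) := by
        gcongr
        exact ContinuousLinearMap.le_opNorm _ y
    _ = matSpectralNorm A * (x ⬝ᵥ x) := by rw [hy]; ring

lemma dotProduct_gramMatrix_mulVec {E : Type*} [NormedAddCommGroup E] [InnerProductSpace ℝ E]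
    {r : ℕ} (φ : Fin r → E) (x y : Fin r → ℝ) :
    x ⬝ᵥ gramMatrix φ *ᵥ y = ⟪∑ j, y j • φ j, ∑ i, x i • φ i⟫ := by
  simp only [dotProduct, Matrix.mulVec, gramMatrix, Matrix.of_apply, sum_inner, inner_sum,
    real_inner_smul_left, real_inner_smul_right, Finset.mul_sum]
  exact Finset.sum_congr rfl fun i _ => Finset.sum_congr rfl fun j _ => by ring

lemma norm_sq_sum_smul_eq_dotProduct_gramMatrix_mulVec {E : Type*} [NormedAddCommGroup E]
    [InnerProductSpace ℝ E] {r : ℕ} (φ : Fin r → E) (x : Fin r → ℝ) :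
    ‖∑ j, x j • φ j‖ ^ 2 = x ⬝ᵥ gramMatrix φ *ᵥ x := by
  rw [dotProduct_gramMatrix_mulVec, real_inner_self_eq_norm_sq]

lemma dotProduct_self_le_matSpectralNorm_inv_mul_norm_sq {E : Type*} [NormedAddCommGroup E]
    [InnerProductSpace ℝ E] {r : ℕ} {φ : Fin r → E} (hM : IsUnit (gramMatrix φ))
    (x : Fin r → ℝ) :
    x ⬝ᵥ x ≤ matSpectralNorm (gramMatrix φ)⁻¹ * ‖∑ j, x j • φ j‖ ^ 2 := by
  set M := gramMatrix φ
  set c := matSpectralNorm M⁻¹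
  set z := M⁻¹ *ᵥ x
  set v := ∑ i, x i • φ i
  set w := ∑ j, z j • φ j
  have hMz : M *ᵥ z = x := by
    rw [Matrix.mulVec_mulVec, Matrix.mul_nonsing_inv _ ((Matrix.isUnit_iff_isUnit_det M).mp hM),
      Matrix.one_mulVec]
  have hwv : ⟪w, v⟫ = x ⬝ᵥ x := by rw [← dotProduct_gramMatrix_mulVec, hMz]
  have hw : ‖w‖ ^ 2 ≤ c * (x ⬝ᵥ x) := by
    rw [norm_sq_sum_smul_eq_dotProduct_gramMatrix_mulVec, hMz, dotProduct_comm]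
    exact dotProduct_mulVec_le_matSpectralNorm_mul _ x
  rcases le_or_gt (x ⬝ᵥ x) 0 with hx | hx
  · exact hx.trans (mul_nonneg (matSpectralNorm_nonneg _) (sq_nonneg _))
  refine le_of_mul_le_mul_left ?_ hx
  calc x ⬝ᵥ x * (x ⬝ᵥ x) = ⟪w, v⟫ * ⟪w, v⟫ := by rw [hwv]
    _ ≤ ‖w‖ ^ 2 * ‖v‖ ^ 2 := by
        simpa only [real_inner_self_eq_norm_sq] using real_inner_mul_inner_self_le w v
    _ ≤ c * (x ⬝ᵥ x) * ‖v‖ ^ 2 := by gcongr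
    _ = x ⬝ᵥ x * (c * ‖v‖ ^ 2) := by ring

theorem pod_inverse_estimate_general
    {E F : Type*} [NormedAddCommGroup E] [InnerProductSpace ℝ E]
    [NormedAddCommGroup F] [InnerProductSpace ℝ F]
    (r : ℕ) (φ : Fin r → E) (ψ : Fin r → F)
    (hMpos : (gramMatrix φ).PosDef) :
    ∀ x : Fin r → ℝ,
      ‖∑ j, x j • ψ j‖ ≤
        Real.sqrt (matSpectralNorm (gramMatrix ψ) * matSpectralNorm (gramMatrix φ)⁻¹) *
          ‖∑ j, x j • φ j‖ := by
  intro x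
  set c := matSpectralNorm (gramMatrix ψ) * matSpectralNorm (gramMatrix φ)⁻¹
  have hc : 0 ≤ c := mul_nonneg (matSpectralNorm_nonneg _) (matSpectralNorm_nonneg _)
  have hsq : ‖∑ j, x j • ψ j‖ ^ 2 ≤ c * ‖∑ j, x j • φ j‖ ^ 2 :=
    calc ‖∑ j, x j • ψ j‖ ^ 2 = x ⬝ᵥ gramMatrix ψ *ᵥ x :=
          norm_sq_sum_smul_eq_dotProduct_gramMatrix_mulVec ψ x
      _ ≤ matSpectralNorm (gramMatrix ψ) * (x ⬝ᵥ x) :=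
          dotProduct_mulVec_le_matSpectralNorm_mul _ x
      _ ≤ matSpectralNorm (gramMatrix ψ) *
            (matSpectralNorm (gramMatrix φ)⁻¹ * ‖∑ j, x j • φ j‖ ^ 2) :=
          mul_le_mul_of_nonneg_left
            (dotProduct_self_le_matSpectralNorm_inv_mul_norm_sq hMpos.isUnit x)
            (matSpectralNorm_nonneg _)
      _ = c * ‖∑ j, x j • φ j‖ ^ 2 := (mul_assoc _ _ _).symm
  rw [← Real.sqrt_sq (norm_nonneg (∑ j, x j • φ j)), ← Real.sqrt_mul hc]
  exact (le_abs_self _).trans (Real.abs_le_sqrt hsq)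

/-- POD inverse estimate: if `M` is the (positive definite) Gram matrix of `φ` in `E`
and `H` the Gram matrix of `ψ` in `F`, then for every `x ∈ ℝ^r`,
`‖∑ x j • ψ j‖ ≤ √(‖H‖₂ ‖M⁻¹‖₂) ‖∑ x j • φ j‖`. -/
theorem pod_inverse_estimate
    {E F : Type*} [NormedAddCommGroup E] [InnerProductSpace ℝ E]
    [NormedAddCommGroup F] [InnerProductSpace ℝ F]
    (r : ℕ) (hr : 0 < r) (φ : Fin r → E) (ψ : Fin r → F)
    (hMpos : (gramMatrix φ).PosDef) :
    ∀ x : Fin r → ℝ,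
      ‖∑ j, x j • ψ j‖ ≤
        Real.sqrt (matSpectralNorm (gramMatrix ψ) * matSpectralNorm (gramMatrix φ)⁻¹) *
          ‖∑ j, x j • φ j‖ :=
  pod_inverse_estimate_general r φ ψ hMpos
end

section
/- Let E be a real inner product space, let Δt > 0, let N be a natural number, and let u : ℕ → E, f : ℕ → E and a : ℕ → ℝ be sequences with a_n ≥ 0 for all n. Suppose that for every n with 0 ≤ n ≤ N−1 the backward Euler energy identity ⟨u_{n+1} − u_n, u_{n+1}⟩ + Δt · a_n = Δt · ⟨f_{n+1}, u_{n+1}⟩ holds. Then ‖u_N‖ ≤ ‖u_0‖ + Δt · Σ_{n=0}^{N−1} ‖f_{n+1}‖. -/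
open scoped RealInnerProductSpace

/- Testing the step with `u (n + 1)` gives `‖u (n+1)‖² ≤ ⟪u n, u (n+1)⟫ + Δt ⟪f (n+1), u (n+1)⟫`,
since the dissipation `Δt * a n` is nonnegative; Cauchy–Schwarz and division by `‖u (n+1)‖`
yield `‖u (n+1)‖ ≤ ‖u n‖ + Δt ‖f (n+1)‖`, and these one-step bounds telescope. -/

theorem le_add_sum_of_succ_le_add {b d : ℕ → ℝ} {N : ℕ} (h : ∀ n < N, b (n + 1) ≤ b n + d n) :
    b N ≤ b 0 + ∑ n ∈ Finset.range N, d n := by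
  have hsum : ∑ n ∈ Finset.range N, (b (n + 1) - b n) ≤ ∑ n ∈ Finset.range N, d n :=
    Finset.sum_le_sum fun n hn => sub_le_iff_le_add'.mpr (h n (Finset.mem_range.mp hn))
  rw [Finset.sum_range_sub] at hsum
  linarith

theorem le_of_mul_self_le_mul {t r : ℝ} (hr : 0 ≤ r) (ht : 0 ≤ t) (h : t * t ≤ r * t) :
    t ≤ r := by
  rcases ht.eq_or_lt with rfl | ht
  · exact hr
  · exact le_of_mul_le_mul_right h ht

section InnerProductSpace

variable {E : Type*} [NormedAddCommGroup E] [InnerProductSpace ℝ E]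

theorem norm_le_add_of_inner_sub_le {x y g : E} {c : ℝ} (hc : 0 ≤ c)
    (h : ⟪y - x, y⟫ ≤ c * ⟪g, y⟫) : ‖y‖ ≤ ‖x‖ + c * ‖g‖ := by
  refine le_of_mul_self_le_mul (by positivity) (norm_nonneg y) ?_
  calc ‖y‖ * ‖y‖ = ⟪y - x, y⟫ + ⟪x, y⟫ := by
        rw [inner_sub_left, real_inner_self_eq_norm_mul_norm]; ring
    _ ≤ c * (‖g‖ * ‖y‖) + ‖x‖ * ‖y‖ :=
        add_le_add (h.trans (mul_le_mul_of_nonneg_left (real_inner_le_norm g y) hc))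
          (real_inner_le_norm x y)
    _ = (‖x‖ + c * ‖g‖) * ‖y‖ := by ring

end InnerProductSpace

/-- Unconditional stability of the backward Euler VMS-POD scheme: if the energy
identity `⟪u (n+1) - u n, u (n+1)⟫ + Δt * a n = Δt * ⟪f (n+1), u (n+1)⟫` holds for all
`0 ≤ n ≤ N - 1` with `a n ≥ 0`, then `‖u N‖ ≤ ‖u 0‖ + Δt * ∑_{n=0}^{N-1} ‖f (n+1)‖`. -/
theorem backwardEuler_stability
    {E : Type*} [NormedAddCommGroup E] [InnerProductSpace ℝ E]
    (Δt : ℝ) (hΔt : 0 < Δt) (N : ℕ) (u f : ℕ → E) (a : ℕ → ℝ)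
    (ha : ∀ n, 0 ≤ a n)
    (hscheme : ∀ n, n < N →
      ⟪u (n + 1) - u n, u (n + 1)⟫ + Δt * a n = Δt * ⟪f (n + 1), u (n + 1)⟫) :
    ‖u N‖ ≤ ‖u 0‖ + Δt * ∑ n ∈ Finset.range N, ‖f (n + 1)‖ := by
  have step : ∀ n < N, ‖u (n + 1)‖ ≤ ‖u n‖ + Δt * ‖f (n + 1)‖ := fun n hn =>
    norm_le_add_of_inner_sub_le hΔt.le
      (by linarith [hscheme n hn, mul_nonneg hΔt.le (ha n)])
  rw [Finset.mul_sum]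
  exact le_add_sum_of_succ_le_add (b := fun n => ‖u n‖) step
end

section
/- Let X be a real inner product space, let N be a positive integer, and let u_1, …, u_N ∈ X be snapshots. Let K be the N×N snapshot correlation matrix with K_{ij} = (1/N)⟨u_j, u_i⟩_X. Suppose λ_1 ≥ λ_2 ≥ … ≥ λ_N ≥ 0 and v_1, …, v_N ∈ ℝ^N satisfy K v_k = λ_k v_k and ⟨v_k, v_l⟩ = (1/N)δ_{kl} for all k, l, with λ_k > 0 exactly for k ≤ d. Define the POD modes φ_k = (1/√λ_k) Σ_{j=1}^N (v_k)_j u_j for k ≤ d. Then for every r with 0 ≤ r ≤ d the POD error formula holds: (1/N) Σ_{i=1}^N ‖u_i − Σ_{j=1}^r ⟨u_i, φ_j⟩_X φ_j‖_X² = Σ_{j=r+1}^d λ_j. -/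
/-!
With `φ j = (√λ j)⁻¹ • ∑ m, v j m • u m`, the eigenvalue equation for the Gram matrix
`G = N • K` gives `⟪u i, φ j⟫ = N √λ j · v j i`; hence the modes with `λ j > 0` are orthonormal
and `∑ i, ⟪u i, φ j⟫ ^ 2 = N λ j`. By Pythagoras the averaged error of projecting onto the first
`r` modes is `(1/N) ∑ i, ‖u i‖ ^ 2 - ∑_{j<r} λ j`, and `(1/N) ∑ i, ‖u i‖ ^ 2 = tr K = ∑ k, λ k`
because the rows `√N • v k` form an orthogonal matrix. The eigenvalues beyond `d` vanish.
-/

open scoped Matrix RealInnerProductSpace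

open Finset Matrix

theorem Matrix.trace_eq_sum_of_mul_eq_mul_diagonal {n R : Type*} [Fintype n] [DecidableEq n]
    [CommRing R] {A P Q : Matrix n n R} {μ : n → R} (hQP : Q * P = 1)
    (hAP : A * P = P * diagonal μ) : A.trace = ∑ i, μ i := by
  calc A.trace = (A * P * Q).trace := by rw [Matrix.mul_assoc, mul_eq_one_comm.mp hQP, mul_one]
    _ = (Q * (A * P)).trace := by rw [trace_mul_comm]
    _ = ∑ i, μ i := by rw [hAP, ← Matrix.mul_assoc, hQP, Matrix.one_mul, trace_diagonal]

theorem Orthonormal.norm_sub_sum_inner_smul_sq {E ι : Type*} [NormedAddCommGroup E]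
    [InnerProductSpace ℝ E] {φ : ι → E} {s : Finset ι} (hφ : Orthonormal ℝ (fun j : s => φ j))
    (x : E) : ‖x - ∑ j ∈ s, ⟪x, φ j⟫ • φ j‖ ^ 2 = ‖x‖ ^ 2 - ∑ j ∈ s, ⟪x, φ j⟫ ^ 2 := by
  have hproj : ⟪x, ∑ j ∈ s, ⟪x, φ j⟫ • φ j⟫ = ∑ j ∈ s, ⟪x, φ j⟫ ^ 2 := by
    simp only [inner_sum, real_inner_smul_right, sq]
  have hnorm : ‖∑ j ∈ s, ⟪x, φ j⟫ • φ j‖ ^ 2 = ∑ j ∈ s, ⟪x, φ j⟫ ^ 2 := by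
    rw [← real_inner_self_eq_norm_sq, ← sum_coe_sort s, hφ.inner_sum, ← sum_coe_sort s]
    simp only [conj_trivial, sq]
  rw [norm_sub_sq_real, hproj, hnorm]
  ring

section Gram

variable {E ι : Type*} [NormedAddCommGroup E] [InnerProductSpace ℝ E] [Fintype ι]
  {w : ι → ℝ} {μ : ℝ}

theorem inner_sum_smul_eq_gram_mulVec (u : ι → E) (c : ι → ℝ) (i : ι) :
    ⟪u i, ∑ m, c m • u m⟫ = (gram ℝ u *ᵥ c) i := by
  simp only [inner_sum, real_inner_smul_right, mulVec, dotProduct, gram_apply, mul_comm]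

theorem inner_sum_smul_of_gram_mulVec_eq {u : ι → E} (hw : gram ℝ u *ᵥ w = μ • w) (i : ι) :
    ⟪u i, ∑ m, w m • u m⟫ = μ * w i := by
  rw [inner_sum_smul_eq_gram_mulVec, hw, Pi.smul_apply, smul_eq_mul]

theorem inner_sum_smul_sum_smul_of_gram_mulVec_eq {u : ι → E} (hw : gram ℝ u *ᵥ w = μ • w)
    (c : ι → ℝ) :
    ⟪∑ m, c m • u m, ∑ m, w m • u m⟫ = μ * (c ⬝ᵥ w) := by
  simp only [sum_inner, real_inner_smul_left, inner_sum_smul_of_gram_mulVec_eq hw, dotProduct,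
    mul_sum]
  exact sum_congr rfl fun m _ => by ring

theorem sum_norm_sq_eq_trace_gram (u : ι → E) : ∑ i, ‖u i‖ ^ 2 = (gram ℝ u).trace := by
  simp only [trace, diag_apply, gram_apply, real_inner_self_eq_norm_sq]

end Gram

theorem Fin.sum_filter_lt_add_sum_filter_Ico {M : Type*} [AddCommMonoid M] {N d r : ℕ}
    {f : Fin N → M} (hf : ∀ k : Fin N, d ≤ (k : ℕ) → f k = 0) :
    ∑ j ∈ univ.filter (fun j : Fin N => (j : ℕ) < r), f j
      + ∑ j ∈ univ.filter (fun j : Fin N => r ≤ (j : ℕ) ∧ (j : ℕ) < d), f j = ∑ j, f j := by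
  rw [sum_filter, sum_filter, ← sum_add_distrib]
  refine sum_congr rfl fun k _ => ?_
  split_ifs with h₁ h₂ h₂
  · omega
  · rw [add_zero]
  · rw [zero_add]
  · rw [zero_add, hf k (by omega)]

section Pod

variable {X : Type*} [NormedAddCommGroup X] [InnerProductSpace ℝ X] {N : ℕ} {u : Fin N → X}
  {lam : Fin N → ℝ} {v : Fin N → Fin N → ℝ}

/-- For `lam k = 0` this is `0`, since `(√0)⁻¹ = 0`. -/
noncomputable def podMode (u : Fin N → X) (lam : Fin N → ℝ) (v : Fin N → Fin N → ℝ)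
    (k : Fin N) : X :=
  (Real.sqrt (lam k))⁻¹ • ∑ j, v k j • u j

theorem gram_mulVec_eq_of_correlation (hN : N ≠ 0) {K : Matrix (Fin N) (Fin N) ℝ}
    (hK : ∀ i j, K i j = (1 / (N : ℝ)) * ⟪u j, u i⟫) (heig : ∀ k, K *ᵥ v k = lam k • v k)
    (k : Fin N) : gram ℝ u *ᵥ v k = ((N : ℝ) * lam k) • v k := by
  have hgram : gram ℝ u = (N : ℝ) • K := by
    ext i j
    rw [Matrix.smul_apply, hK, gram_apply, real_inner_comm, smul_eq_mul]
    field_simp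
  rw [hgram, smul_mulVec, heig, smul_smul]

theorem inner_podMode (hG : ∀ k, gram ℝ u *ᵥ v k = ((N : ℝ) * lam k) • v k) {j : Fin N}
    (hj : 0 < lam j) (i : Fin N) :
    ⟪u i, podMode u lam v j⟫ = N * Real.sqrt (lam j) * v j i := by
  have hsqrt : Real.sqrt (lam j) ^ 2 = lam j := Real.sq_sqrt hj.le
  have hne : Real.sqrt (lam j) ≠ 0 := (Real.sqrt_pos.mpr hj).ne'
  rw [podMode, real_inner_smul_right, inner_sum_smul_of_gram_mulVec_eq (hG j)]
  field_simp
  rw [hsqrt]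
  ring

theorem orthonormal_podMode (hG : ∀ k, gram ℝ u *ᵥ v k = ((N : ℝ) * lam k) • v k)
    (horth : ∀ k l, v k ⬝ᵥ v l = if k = l then 1 / (N : ℝ) else 0) (hN : N ≠ 0)
    {s : Finset (Fin N)} (hs : ∀ j ∈ s, 0 < lam j) :
    Orthonormal ℝ (fun j : s => podMode u lam v j) := by
  rw [orthonormal_iff_ite]
  rintro ⟨j, hj⟩ ⟨k, hk⟩
  simp only [podMode, real_inner_smul_left, real_inner_smul_right,
    inner_sum_smul_sum_smul_of_gram_mulVec_eq (hG k), horth, Subtype.mk.injEq]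
  split_ifs with h
  · subst h
    have hsqrt : Real.sqrt (lam j) ^ 2 = lam j := Real.sq_sqrt (hs j hj).le
    have hne : Real.sqrt (lam j) ≠ 0 := (Real.sqrt_pos.mpr (hs j hj)).ne'
    field_simp
    rw [hsqrt]
  · simp

theorem sum_inner_podMode_sq (hG : ∀ k, gram ℝ u *ᵥ v k = ((N : ℝ) * lam k) • v k)
    (horth : ∀ k l, v k ⬝ᵥ v l = if k = l then 1 / (N : ℝ) else 0) (hN : N ≠ 0)
    {j : Fin N} (hj : 0 < lam j) :
    ∑ i, ⟪u i, podMode u lam v j⟫ ^ 2 = N * lam j := by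
  have hvv : ∑ i, v j i * v j i = 1 / (N : ℝ) := by simpa [dotProduct] using horth j j
  simp only [inner_podMode hG hj, mul_pow, Real.sq_sqrt hj.le, sq (v j _), ← mul_sum, hvv]
  field_simp

theorem sum_norm_sq_eq_mul_sum_eigenvalues
    (hG : ∀ k, gram ℝ u *ᵥ v k = ((N : ℝ) * lam k) • v k)
    (horth : ∀ k l, v k ⬝ᵥ v l = if k = l then 1 / (N : ℝ) else 0) (hN : N ≠ 0) :
    ∑ i, ‖u i‖ ^ 2 = N * ∑ k, lam k := by
  have hVV : ((N : ℝ) • Matrix.of v) * (Matrix.of v)ᵀ = 1 := by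
    ext k l
    simp only [Matrix.smul_apply, mul_apply, transpose_apply, of_apply, one_apply,
      smul_eq_mul, mul_assoc, ← mul_sum]
    rw [← dotProduct, horth]
    split_ifs
    · field_simp
    · rw [mul_zero]
  have hG' :
      gram ℝ u * (Matrix.of v)ᵀ = (Matrix.of v)ᵀ * diagonal (fun k => (N : ℝ) * lam k) := by
    ext i k
    rw [mul_diagonal, transpose_apply, of_apply, mul_apply]
    simpa [mulVec, dotProduct, mul_comm] using congrFun (hG k) i
  rw [sum_norm_sq_eq_trace_gram, trace_eq_sum_of_mul_eq_mul_diagonal hVV hG', mul_sum]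

theorem average_norm_sub_sum_inner_podMode_smul_sq
    (hG : ∀ k, gram ℝ u *ᵥ v k = ((N : ℝ) * lam k) • v k)
    (horth : ∀ k l, v k ⬝ᵥ v l = if k = l then 1 / (N : ℝ) else 0) (hN : N ≠ 0)
    {s : Finset (Fin N)} (hs : ∀ j ∈ s, 0 < lam j) :
    (1 / (N : ℝ)) * ∑ i, ‖u i - ∑ j ∈ s, ⟪u i, podMode u lam v j⟫ • podMode u lam v j‖ ^ 2
      = ∑ k, lam k - ∑ j ∈ s, lam j := by
  simp only [(orthonormal_podMode hG horth hN hs).norm_sub_sum_inner_smul_sq, sum_sub_distrib]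
  rw [sum_comm, sum_congr rfl fun j hj => sum_inner_podMode_sq hG horth hN (hs j hj),
    sum_norm_sq_eq_mul_sum_eigenvalues hG horth hN, ← mul_sum]
  field_simp

end Pod

theorem pod_error_formula_general
    {X : Type*} [NormedAddCommGroup X] [InnerProductSpace ℝ X]
    (N : ℕ) (hN : 0 < N) (u : Fin N → X)
    (K : Matrix (Fin N) (Fin N) ℝ)
    (hK : ∀ i j, K i j = (1 / (N : ℝ)) * ⟪u j, u i⟫)
    (lam : Fin N → ℝ) (v : Fin N → Fin N → ℝ)
    (hnonneg : ∀ k, 0 ≤ lam k)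
    (heig : ∀ k, K.mulVec (v k) = lam k • v k)
    (horth : ∀ k l, v k ⬝ᵥ v l = if k = l then 1 / (N : ℝ) else 0)
    (d : ℕ)
    (hpos : ∀ k : Fin N, 0 < lam k ↔ (k : ℕ) < d)
    (φ : Fin N → X)
    (hφ : ∀ k : Fin N, (k : ℕ) < d →
      φ k = (Real.sqrt (lam k))⁻¹ • ∑ j, v k j • u j) :
    ∀ r : ℕ, r ≤ d →
      (1 / (N : ℝ)) * ∑ i : Fin N,
          ‖u i - ∑ j ∈ Finset.univ.filter (fun j : Fin N => (j : ℕ) < r),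
              ⟪u i, φ j⟫ • φ j‖ ^ 2
        = ∑ j ∈ Finset.univ.filter (fun j : Fin N => r ≤ (j : ℕ) ∧ (j : ℕ) < d), lam j := by
  intro r hr
  have hG := gram_mulVec_eq_of_correlation hN.ne' hK heig
  have hlt : ∀ j ∈ univ.filter (fun j : Fin N => (j : ℕ) < r), (j : ℕ) < d :=
    fun j hj => (mem_filter.mp hj).2.trans_le hr
  have hmodes : ∀ i, ∑ j ∈ univ.filter (fun j : Fin N => (j : ℕ) < r), ⟪u i, φ j⟫ • φ j
      = ∑ j ∈ univ.filter (fun j : Fin N => (j : ℕ) < r),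
          ⟪u i, podMode u lam v j⟫ • podMode u lam v j :=
    fun i => sum_congr rfl fun j hj => by rw [hφ j (hlt j hj), podMode]
  have hzero : ∀ k : Fin N, d ≤ (k : ℕ) → lam k = 0 :=
    fun k hk => le_antisymm (not_lt.mp fun h => (not_lt.mpr hk) ((hpos k).mp h)) (hnonneg k)
  simp only [hmodes]
  rw [average_norm_sub_sum_inner_podMode_smul_sq hG horth hN.ne'
      fun j hj => (hpos j).mpr (hlt j hj),
    ← Fin.sum_filter_lt_add_sum_filter_Ico hzero, add_sub_cancel_left]

/-- POD error formula: with snapshots `u i` in a real inner product space `X`,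
correlation matrix `K i j = (1/N) ⟪u j, u i⟫`, decreasingly ordered eigenvalues
`λ 0 ≥ λ 1 ≥ … ≥ λ (N-1) ≥ 0` (positive exactly for indices `< d`), eigenvectors
normalized by `⟨v k, v l⟩ = (1/N) δ k l`, and POD modes
`φ k = (1/√(λ k)) ∑ j, (v k) j • u j`, for every `r ≤ d` the average squared
projection error of the snapshots onto the first `r` POD modes equals the tail
eigenvalue sum `∑_{j=r}^{d-1} λ j`. -/
theorem pod_error_formula
    {X : Type*} [NormedAddCommGroup X] [InnerProductSpace ℝ X]
    (N : ℕ) (hN : 0 < N) (u : Fin N → X)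
    (K : Matrix (Fin N) (Fin N) ℝ)
    (hK : ∀ i j, K i j = (1 / (N : ℝ)) * ⟪u j, u i⟫)
    (lam : Fin N → ℝ) (v : Fin N → Fin N → ℝ)
    (hsorted : ∀ k l : Fin N, k ≤ l → lam l ≤ lam k)
    (hnonneg : ∀ k, 0 ≤ lam k)
    (heig : ∀ k, K.mulVec (v k) = lam k • v k)
    (horth : ∀ k l, v k ⬝ᵥ v l = if k = l then 1 / (N : ℝ) else 0)
    (d : ℕ) (hd : d ≤ N)
    (hpos : ∀ k : Fin N, 0 < lam k ↔ (k : ℕ) < d)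
    (φ : Fin N → X)
    (hφ : ∀ k : Fin N, (k : ℕ) < d →
      φ k = (Real.sqrt (lam k))⁻¹ • ∑ j, v k j • u j) :
    ∀ r : ℕ, r ≤ d →
      (1 / (N : ℝ)) * ∑ i : Fin N,
          ‖u i - ∑ j ∈ Finset.univ.filter (fun j : Fin N => (j : ℕ) < r),
              ⟪u i, φ j⟫ • φ j‖ ^ 2
        = ∑ j ∈ Finset.univ.filter (fun j : Fin N => r ≤ (j : ℕ) ∧ (j : ℕ) < d), lam j :=
  pod_error_formula_general N hN u K hK lam v hnonneg heig horth d hpos φ hφ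
end
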